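/- Let (X,Y) have joint pmf p on {1,…,N}×{1,…,M} with α = p(1,1) > 0, β = p(1,2) > 0, γ = p(2,1) > 0, δ = p(2,2), and suppose either (δ > 0 and αδ < βγ) or δ = 0. For p̄ ∈ (0,1), q = 1 − p̄, define U, V jointly with (X,Y) by: with probability p̄ (independently), U = X and V = Y; with probability q, U = max{2, X} and V = max{2, Y}. Then for all sufficiently small q > 0, the Ingleton expression Ing(U,V,X,Y) = −I(X;Y) + I(X;Y|U) + I(X;Y|V) + I(U;V) is strictly negative. -/

import Mathlib

open Real BigOperators Finset

section Defs
variable {Ω : Type} [Fintype Ω]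

/-- `p` is a probability mass function on the finite sample space `Ω`. -/
def IsPmf (p : Ω → ℝ) : Prop := (∀ ω, 0 ≤ p ω) ∧ ∑ ω, p ω = 1

/-- Distribution of the random variable `f` under `p`. -/
noncomputable def distOf (p : Ω → ℝ) {α : Type} [Fintype α] [DecidableEq α]
    (f : Ω → α) : α → ℝ := fun a => ∑ ω, if f ω = a then p ω else 0

/-- Shannon entropy (in nats) of the random variable `f` under `p`. -/
noncomputable def ent (p : Ω → ℝ) {α : Type} [Fintype α] [DecidableEq α]
    (f : Ω → α) : ℝ := ∑ a, Real.negMulLog (distOf p f a)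

/-- Mutual information `I(f;g)` under `p`. -/
noncomputable def mi (p : Ω → ℝ) {α β : Type} [Fintype α] [DecidableEq α]
    [Fintype β] [DecidableEq β] (f : Ω → α) (g : Ω → β) : ℝ :=
  ent p f + ent p g - ent p (fun ω => (f ω, g ω))

/-- Conditional mutual information `I(f;g|h)` under `p`. -/
noncomputable def cmi (p : Ω → ℝ) {α β γ : Type} [Fintype α] [DecidableEq α]
    [Fintype β] [DecidableEq β] [Fintype γ] [DecidableEq γ]
    (f : Ω → α) (g : Ω → β) (h : Ω → γ) : ℝ :=
  ent p (fun ω => (f ω, h ω)) + ent p (fun ω => (g ω, h ω))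
    - ent p (fun ω => (f ω, g ω, h ω)) - ent p h

end Defs

/-- Tension region of `(X,Y)`: the set of triples
`(I(X;Z|Y), I(Y;Z|X), I(X;Y|Z))` as `Z` ranges over all finitely supported
random variables jointly distributed with `(X,Y)`. -/
def tension {Ω : Type} [Fintype Ω] {α β : Type} [Fintype α] [DecidableEq α]
    [Fintype β] [DecidableEq β] (p : Ω → ℝ) (X : Ω → α) (Y : Ω → β) :
    Set (ℝ × ℝ × ℝ) :=
  { t | ∃ (m : ℕ) (q : α × β × Fin m → ℝ), IsPmf q ∧
      distOf q (fun w => (w.1, w.2.1)) = distOf p (fun ω => (X ω, Y ω)) ∧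
      t = (cmi q (fun w => w.1) (fun w => w.2.2) (fun w => w.2.1),
           cmi q (fun w => w.2.1) (fun w => w.2.2) (fun w => w.1),
           cmi q (fun w => w.1) (fun w => w.2.1) (fun w => w.2.2)) }

/-!
For any four random variables the Ingleton expression equals
`I(Y;U|X) + I(X;V|Y) + H(U,Y) + H(X,V) - H(X,Y) - H(U,V)`. Here `U` is a function of `X` and a coin
independent of `(X,Y)`, and `V` is a function of `Y` and the same coin, so both conditional mutual
informations vanish. In the remaining entropy combination every cell `(u,v)` outside `{0,1}²`
contributes zero, which leaves an explicit function `clipIngleton α β γ δ q` of the four corner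
masses. It vanishes at `q = 0`; if `δ > 0` its derivative there is `α log (αδ / (βγ)) < 0`, and if
`δ = 0` it behaves like `α q log q`. Either way it is negative for small `q > 0`.
-/

section Entropy

variable {Ω : Type} [Fintype Ω] {α β : Type} [Fintype α] [DecidableEq α] [Fintype β]
  [DecidableEq β]

theorem sum_distOf (p : Ω → ℝ) (f : Ω → α) : ∑ a, distOf p f a = ∑ ω, p ω := by
  simp only [distOf]
  rw [Finset.sum_comm]
  simp

theorem sum_distOf_prod_mk_right (p : Ω → ℝ) (f : Ω → α) (g : Ω → β) (a : α) :
    ∑ b, distOf p (fun ω => (f ω, g ω)) (a, b) = distOf p f a := by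
  simp only [distOf, Prod.mk.injEq]
  rw [Finset.sum_comm]
  refine Finset.sum_congr rfl fun ω _ => ?_
  by_cases h : f ω = a <;> simp [h]

theorem ent_comp_of_injective (p : Ω → ℝ) (f : Ω → α) {e : α → β} (he : Function.Injective e) :
    ent p (fun ω => e (f ω)) = ent p f := by
  refine (Fintype.sum_of_injective e he _ _ (fun b hb => ?_) (fun a => ?_)).symm
  · have : ∀ ω, e (f ω) ≠ b := fun ω h => hb ⟨f ω, h⟩
    simp [distOf, this]
  · simp only [distOf, he.eq_iff]

theorem ent_prod_comm (p : Ω → ℝ) (f : Ω → α) (g : Ω → β) :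
    ent p (fun ω => (g ω, f ω)) = ent p (fun ω => (f ω, g ω)) :=
  ent_comp_of_injective p (fun ω => (f ω, g ω)) (e := Prod.swap) Prod.swap_injective

theorem distOf_fst_snd (p : α × β → ℝ) (z : α × β) :
    distOf p (fun x => (x.1, x.2)) z = p z := by
  simp [distOf]

end Entropy

theorem distOf_map_fst {α β α' γ : Type} [Fintype α] [DecidableEq α] [Fintype β] [Fintype α']
    [DecidableEq α'] [Fintype γ] [DecidableEq γ] (p : α × β → ℝ) (c : α → α') (G : α × β → γ)
    (u : α') (w : γ) :
    distOf p (fun x => (c x.1, G x)) (u, w)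
      = ∑ a, if c a = u then distOf p (fun x => (x.1, G x)) (a, w) else 0 := by
  simp only [distOf, Prod.mk.injEq]
  simp_rw [Finset.ite_sum_zero]
  rw [Finset.sum_comm]
  refine Finset.sum_congr rfl fun x _ => ?_
  rw [Finset.sum_eq_single x.1 (fun a _ ha => by simp [Ne.symm ha]) (by simp)]
  by_cases h : c x.1 = u <;> simp [h]

theorem distOf_map_snd {α β β' γ : Type} [Fintype α] [Fintype β] [DecidableEq β] [Fintype β']
    [DecidableEq β'] [Fintype γ] [DecidableEq γ] (p : α × β → ℝ) (F : α × β → γ) (c : β → β')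
    (w : γ) (v : β') :
    distOf p (fun x => (F x, c x.2)) (w, v)
      = ∑ b, if c b = v then distOf p (fun x => (F x, x.2)) (w, b) else 0 := by
  simp only [distOf, Prod.mk.injEq]
  simp_rw [Finset.ite_sum_zero]
  rw [Finset.sum_comm]
  refine Finset.sum_congr rfl fun x _ => ?_
  rw [Finset.sum_eq_single x.2 (fun b _ hb => by simp [Ne.symm hb]) (by simp)]
  by_cases h : c x.2 = v <;> simp [h]

section Ingleton

variable {Ω : Type} [Fintype Ω] {α β γ δ : Type} [Fintype α] [DecidableEq α] [Fintype β]
  [DecidableEq β] [Fintype γ] [DecidableEq γ] [Fintype δ] [DecidableEq δ]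

noncomputable def ingleton (μ : Ω → ℝ) (X : Ω → α) (Y : Ω → β) (U : Ω → γ) (V : Ω → δ) : ℝ :=
  -(mi μ X Y) + cmi μ X Y U + cmi μ X Y V + mi μ U V

theorem ingleton_eq_cmi_add_cmi_add (μ : Ω → ℝ) (X : Ω → α) (Y : Ω → β) (U : Ω → γ)
    (V : Ω → δ) :
    ingleton μ X Y U V = cmi μ Y U X + cmi μ X V Y
      + (ent μ (fun ω => (U ω, Y ω)) + ent μ (fun ω => (X ω, V ω)) - ent μ (fun ω => (X ω, Y ω))
        - ent μ (fun ω => (U ω, V ω))) := by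
  have hYUX : ent μ (fun ω => (Y ω, U ω, X ω)) = ent μ (fun ω => (X ω, Y ω, U ω)) :=
    ent_comp_of_injective μ (fun ω => (X ω, Y ω, U ω)) (e := fun t => (t.2.1, t.2.2, t.1))
      fun s t h => by
        simp only [Prod.mk.injEq] at h
        exact Prod.ext h.2.2 (Prod.ext h.1 h.2.1)
  have hXVY : ent μ (fun ω => (X ω, V ω, Y ω)) = ent μ (fun ω => (X ω, Y ω, V ω)) :=
    ent_comp_of_injective μ (fun ω => (X ω, Y ω, V ω)) (e := fun t => (t.1, t.2.2, t.2.1))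
      fun s t h => by
        simp only [Prod.mk.injEq] at h
        exact Prod.ext h.1 (Prod.ext h.2.2 h.2.1)
  simp only [ingleton, mi, cmi]
  rw [ent_prod_comm μ X Y, ent_prod_comm μ X U, ent_prod_comm μ Y V, ent_prod_comm μ Y U, hYUX,
    hXVY]
  ring

end Ingleton

def prodPmf {A B : Type} (p : A → ℝ) (r : B → ℝ) : A × B → ℝ := fun w => p w.1 * r w.2

section ProdPmf

variable {A B : Type} [Fintype A] [Fintype B] (p : A → ℝ) (r : B → ℝ)
  {α β γ : Type} [Fintype α] [DecidableEq α] [Fintype β] [DecidableEq β] [Fintype γ]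
  [DecidableEq γ]

theorem distOf_prodPmf (f : A × B → α) (a : α) :
    distOf (prodPmf p r) f a = ∑ b, r b * distOf p (fun x => f (x, b)) a := by
  simp only [distOf, prodPmf, Fintype.sum_prod_type, Finset.mul_sum]
  rw [Finset.sum_comm]
  refine Finset.sum_congr rfl fun x _ => Finset.sum_congr rfl fun b _ => ?_
  split_ifs <;> ring

theorem distOf_prodPmf_pair (f : A → α) (k : α → B → γ) (a : α) (c : γ) :
    distOf (prodPmf p r) (fun w => (f w.1, k (f w.1) w.2)) (a, c)
      = distOf p f a * distOf r (k a) c := by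
  simp only [distOf, prodPmf, Fintype.sum_prod_type, Prod.mk.injEq, Finset.sum_mul]
  refine Finset.sum_congr rfl fun x _ => ?_
  by_cases hx : f x = a
  · subst hx
    simp only [true_and, Finset.mul_sum]
    exact Finset.sum_congr rfl fun b _ => by split_ifs <;> ring
  · simp [hx]

variable {r}

theorem ent_prodPmf_of_comp_fst (hr : ∑ b, r b = 1) (f : A → α) :
    ent (prodPmf p r) (fun w => f w.1) = ent p f := by
  simp only [ent, distOf_prodPmf, ← Finset.sum_mul, hr, one_mul]

theorem ent_prodPmf_pair (hr : ∑ b, r b = 1) (f : A → α) (k : α → B → γ) :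
    ent (prodPmf p r) (fun w => (f w.1, k (f w.1) w.2))
      = ent p f + ∑ a, distOf p f a * ent r (k a) := by
  simp only [ent, Fintype.sum_prod_type, distOf_prodPmf_pair, Real.negMulLog_mul,
    Finset.sum_add_distrib, ← Finset.sum_mul, ← Finset.mul_sum, sum_distOf, hr, one_mul]

theorem cmi_prodPmf_eq_zero (hr : ∑ b, r b = 1) (f : A → α) (g : A → β) (k : α → B → γ) :
    cmi (prodPmf p r) (fun w => g w.1) (fun w => k (f w.1) w.2) (fun w => f w.1) = 0 := by
  have hGKF : ent (prodPmf p r) (fun w => (g w.1, k (f w.1) w.2, f w.1))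
      = ent (prodPmf p r) (fun w => ((f w.1, g w.1), k (f w.1) w.2)) :=
    ent_comp_of_injective (prodPmf p r) (fun w => ((f w.1, g w.1), k (f w.1) w.2))
      (e := fun t => (t.1.2, t.2, t.1.1)) fun s t h => by
        simp only [Prod.mk.injEq] at h
        exact Prod.ext (Prod.ext h.2.2 h.1) h.2.1
  simp only [cmi]
  -- `H(F,K) - H(F)` and `H((F,G),K) - H(F,G)` are the same average entropy of the coin's image.
  rw [ent_prodPmf_of_comp_fst p hr (fun x => (g x, f x)), ent_prod_comm p f g,
    ent_prod_comm (prodPmf p r) (fun w => f w.1) (fun w => k (f w.1) w.2), hGKF,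
    ent_prodPmf_of_comp_fst p hr, ent_prodPmf_pair p hr,
    ent_prodPmf_pair p hr (fun x => (f x, g x)) (fun t => k t.1), Fintype.sum_prod_type]
  simp only [← Finset.sum_mul, sum_distOf_prod_mk_right]
  ring

end ProdPmf

section ClipFibres

theorem sum_ite_max_eq_of_lt {ι : Type} [LinearOrder ι] [Fintype ι] {a u : ι} (hau : a < u)
    (g : ι → ℝ) : ∑ x, (if max a x = u then g x else 0) = g u := by
  have hiff : ∀ x, max a x = u ↔ x = u := fun x => by
    constructor
    · intro h
      rcases max_choice a x with hx | hx
      · exact absurd (hx ▸ h) hau.ne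
      · rwa [hx] at h
    · rintro rfl
      exact max_eq_right hau.le
  simp only [hiff, Finset.sum_ite_eq', Finset.mem_univ, if_true]

theorem sum_ite_max_eq_of_gt {ι : Type} [LinearOrder ι] [Fintype ι] {a u : ι} (hua : u < a)
    (g : ι → ℝ) : ∑ x, (if max a x = u then g x else 0) = 0 :=
  Finset.sum_eq_zero fun x _ => if_neg (hua.trans_le (le_max_left a x)).ne'

theorem Fin.sum_ite_max_one_eq_one {n : ℕ} (g : Fin (n + 2) → ℝ) :
    ∑ x, (if max 1 x = 1 then g x else 0) = g 0 + g 1 := by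
  rw [Fin.sum_univ_succ, Fin.sum_univ_succ, Finset.sum_eq_zero fun i _ => if_neg ?_]
  · simp
  · have hi : (1 : Fin (n + 2)) < i.succ.succ := by simp [Fin.lt_def]
    rw [max_eq_right hi.le]
    exact hi.ne'

theorem Fin.sum_prod_eq_of_one_lt {n m : ℕ} (T : Fin (n + 2) × Fin (m + 2) → ℝ)
    (hT : ∀ u v, (1 < u ∨ 1 < v) → T (u, v) = 0) :
    ∑ z, T z = T (0, 0) + T (0, 1) + (T (1, 0) + T (1, 1)) := by
  have one_lt {k : ℕ} (u : Fin (k + 2)) (hu : u ≠ 0 ∧ u ≠ 1) : 1 < u := by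
    simp only [ne_eq, Fin.ext_iff, Fin.val_zero, Fin.val_one] at hu
    simp only [Fin.lt_def, Fin.val_one]
    omega
  rw [Fintype.sum_prod_type, Fintype.sum_eq_add 0 1 zero_ne_one fun u hu =>
      Finset.sum_eq_zero fun v _ => hT u v (Or.inl (one_lt u hu))]
  congr 1 <;> exact Fintype.sum_eq_add 0 1 zero_ne_one fun v hv => hT _ v (Or.inr (one_lt v hv))

end ClipFibres

section Construction

def coinFlip (q : ℝ) : Bool → ℝ := fun b => if b then 1 - q else q

theorem sum_coinFlip (q : ℝ) : ∑ b, coinFlip q b = 1 := by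
  simp [coinFlip]

def coinClip {n : ℕ} (x : Fin (n + 2)) (b : Bool) : Fin (n + 2) := if b then x else max 1 x

noncomputable def clipIngleton (a b c d q : ℝ) : ℝ :=
  (negMulLog ((1 - q) * a) - negMulLog a) + (negMulLog (b + q * a) - negMulLog b)
    + (negMulLog (c + q * a) - negMulLog c)
    + (negMulLog (d + q * b) + negMulLog (d + q * c) - negMulLog d
      - negMulLog (d + q * (a + b + c)))

variable {N M : ℕ} (p : Fin (N + 2) × Fin (M + 2) → ℝ) (q : ℝ)

theorem ent_coinClip_combination_eq :
    ent (prodPmf p (coinFlip q)) (fun w => (coinClip w.1.1 w.2, w.1.2))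
      + ent (prodPmf p (coinFlip q)) (fun w => (w.1.1, coinClip w.1.2 w.2))
      - ent (prodPmf p (coinFlip q)) (fun w => (w.1.1, w.1.2))
      - ent (prodPmf p (coinFlip q)) (fun w => (coinClip w.1.1 w.2, coinClip w.1.2 w.2))
      = clipIngleton (p (0, 0)) (p (0, 1)) (p (1, 0)) (p (1, 1)) q := by
  simp only [ent, ← Finset.sum_add_distrib, ← Finset.sum_sub_distrib, distOf_prodPmf,
    Fintype.sum_bool, coinFlip, coinClip, if_true, Bool.false_eq_true, if_false]
  rw [Fin.sum_prod_eq_of_one_lt]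
  · simp only [distOf_map_fst, distOf_map_snd, distOf_fst_snd, Fin.sum_ite_max_one_eq_one,
      sum_ite_max_eq_of_gt Fin.zero_lt_one]
    unfold clipIngleton
    ring_nf
  · rintro u v (hu | hv)
    · simp only [distOf_map_fst, distOf_map_snd, sum_ite_max_eq_of_lt hu]
      ring
    · simp only [distOf_map_fst, distOf_map_snd, sum_ite_max_eq_of_lt hv]
      ring

theorem ingleton_coinClip_eq :
    ingleton (prodPmf p (coinFlip q)) (fun w => w.1.1) (fun w => w.1.2)
      (fun w => coinClip w.1.1 w.2) (fun w => coinClip w.1.2 w.2)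
      = clipIngleton (p (0, 0)) (p (0, 1)) (p (1, 0)) (p (1, 1)) q := by
  rw [ingleton_eq_cmi_add_cmi_add,
    cmi_prodPmf_eq_zero p (sum_coinFlip q) Prod.fst Prod.snd coinClip,
    cmi_prodPmf_eq_zero p (sum_coinFlip q) Prod.snd Prod.fst coinClip, zero_add, zero_add]
  exact ent_coinClip_combination_eq p q

end Construction

section Asymptotics

open Filter Topology

theorem hasDerivAt_negMulLog_add_mul {c : ℝ} (hc : c ≠ 0) (a : ℝ) :
    HasDerivAt (fun q => negMulLog (c + q * a)) (-(log c + 1) * a) 0 := by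
  have h := (Real.hasDerivAt_negMulLog (x := c + 0 * a) (by simpa using hc)).comp (0 : ℝ)
    ((hasDerivAt_mul_const a).const_add c)
  rw [zero_mul, add_zero] at h
  exact h.congr_deriv (by ring)

theorem tendsto_div_nhdsGT_of_hasDerivAt {f : ℝ → ℝ} {L : ℝ} (hf : HasDerivAt f L 0)
    (hf0 : f 0 = 0) : Tendsto (fun q => f q / q) (𝓝[>] 0) (𝓝 L) := by
  simpa [hf0, div_eq_inv_mul] using hf.tendsto_slope_zero_right

theorem eventually_neg_of_tendsto_div {f : ℝ → ℝ} {l : Filter ℝ}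
    (hf : Tendsto (fun q => f q / q) (𝓝[>] 0) l) (hl : ∀ᶠ y in l, y < 0) :
    ∀ᶠ q in 𝓝[>] 0, f q < 0 := by
  filter_upwards [hf.eventually hl, self_mem_nhdsWithin] with q hq (hq0 : 0 < q)
  exact ((div_neg_iff.mp hq).resolve_left fun h => h.2.not_gt hq0).1

theorem hasDerivAt_clipIngleton_head {a b c : ℝ} (ha : 0 < a) (hb : 0 < b) (hc : 0 < c) :
    HasDerivAt (fun q => (negMulLog ((1 - q) * a) - negMulLog a)
        + (negMulLog (b + q * a) - negMulLog b) + (negMulLog (c + q * a) - negMulLog c))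
      (a * (log a - log b - log c - 1)) 0 := by
  have h1 : HasDerivAt (fun q => negMulLog ((1 - q) * a)) (-(log a + 1) * -a) 0 := by
    convert hasDerivAt_negMulLog_add_mul ha.ne' (-a) using 3
    ring
  exact (((h1.sub_const (negMulLog a)).add
    ((hasDerivAt_negMulLog_add_mul hb.ne' a).sub_const (negMulLog b))).add
    ((hasDerivAt_negMulLog_add_mul hc.ne' a).sub_const (negMulLog c))).congr_deriv (by ring)

theorem eventually_clipIngleton_neg_of_pos {a b c d : ℝ} (ha : 0 < a) (hb : 0 < b) (hc : 0 < c)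
    (hd : 0 < d) (had : a * d < b * c) : ∀ᶠ q in 𝓝[>] 0, clipIngleton a b c d q < 0 := by
  have hTail : HasDerivAt (fun q => negMulLog (d + q * b) + negMulLog (d + q * c) - negMulLog d
      - negMulLog (d + q * (a + b + c))) (a * (log d + 1)) 0 :=
    ((((hasDerivAt_negMulLog_add_mul hd.ne' b).add
      (hasDerivAt_negMulLog_add_mul hd.ne' c)).sub_const (negMulLog d)).sub
      (hasDerivAt_negMulLog_add_mul hd.ne' (a + b + c))).congr_deriv (by ring)
  have hL : a * (log a - log b - log c - 1) + a * (log d + 1) < 0 := by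
    have hlog : log (a * d) < log (b * c) := log_lt_log (by positivity) had
    rw [log_mul ha.ne' hd.ne', log_mul hb.ne' hc.ne'] at hlog
    nlinarith
  exact eventually_neg_of_tendsto_div (tendsto_div_nhdsGT_of_hasDerivAt
    ((hasDerivAt_clipIngleton_head ha hb hc).add hTail) (by simp [clipIngleton]))
    (eventually_lt_nhds hL)

theorem eventually_clipIngleton_neg_of_zero {a b c : ℝ} (ha : 0 < a) (hb : 0 < b) (hc : 0 < c) :
    ∀ᶠ q in 𝓝[>] 0, clipIngleton a b c 0 q < 0 := by
  have hHead := tendsto_div_nhdsGT_of_hasDerivAt (hasDerivAt_clipIngleton_head ha hb hc) (by simp)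
  have hlog : Tendsto (fun q => a * log q) (𝓝[>] 0) atBot :=
    tendsto_log_nhdsGT_zero.const_mul_atBot ha
  -- For `d = 0`, `negMulLog_mul` splits `a * q * log q` off the tail; the rest is linear in `q`.
  refine eventually_neg_of_tendsto_div
    (((hHead.add_const (negMulLog b + negMulLog c - negMulLog (a + b + c))).add_atBot hlog).congr'
      ?_) (eventually_lt_atBot 0)
  filter_upwards [self_mem_nhdsWithin] with q (hq : 0 < q)
  simp only [clipIngleton, zero_add, negMulLog_zero, negMulLog_mul q]
  simp only [negMulLog]
  field_simp
  ring

theorem eventually_clipIngleton_neg {a b c d : ℝ} (ha : 0 < a) (hb : 0 < b) (hc : 0 < c)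
    (hd : (0 < d ∧ a * d < b * c) ∨ d = 0) : ∀ᶠ q in 𝓝[>] 0, clipIngleton a b c d q < 0 := by
  rcases hd with ⟨hd, had⟩ | rfl
  · exact eventually_clipIngleton_neg_of_pos ha hb hc hd had
  · exact eventually_clipIngleton_neg_of_zero ha hb hc

end Asymptotics

/-- Alphabets are `0`-indexed: the paper's symbols `1, 2` are `0, 1` here, and `max{2,·}` is
`max 1 ·`. -/
theorem stmt16_general {N M : ℕ} (p : Fin (N + 2) × Fin (M + 2) → ℝ)
    (hα : 0 < p (0, 0)) (hβ : 0 < p (0, 1)) (hγ : 0 < p (1, 0))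
    (hδ : (0 < p (1, 1) ∧ p (0, 0) * p (1, 1) < p (0, 1) * p (1, 0)) ∨
      p (1, 1) = 0) :
    ∃ ε > (0:ℝ), ∀ q : ℝ, 0 < q → q < ε →
      (fun pq : (Fin (N + 2) × Fin (M + 2)) × Bool → ℝ =>
        (fun (X : ((Fin (N + 2) × Fin (M + 2)) × Bool) → Fin (N + 2))
             (Y : ((Fin (N + 2) × Fin (M + 2)) × Bool) → Fin (M + 2))
             (U : ((Fin (N + 2) × Fin (M + 2)) × Bool) → Fin (N + 2))
             (V : ((Fin (N + 2) × Fin (M + 2)) × Bool) → Fin (M + 2)) =>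
          -(mi pq X Y) + cmi pq X Y U + cmi pq X Y V + mi pq U V)
          (fun w => w.1.1) (fun w => w.1.2)
          (fun w => if w.2 then w.1.1 else max 1 w.1.1)
          (fun w => if w.2 then w.1.2 else max 1 w.1.2))
        (fun w => p w.1 * (if w.2 then 1 - q else q)) < 0 := by
  obtain ⟨ε, hε, hneg⟩ :=
    mem_nhdsGT_iff_exists_Ioo_subset.mp (eventually_clipIngleton_neg hα hβ hγ hδ)
  exact ⟨ε, hε, fun q hq hqε => (ingleton_coinClip_eq p q).trans_lt (hneg ⟨hq, hqε⟩)⟩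

/-- The Gács–Körner construction: with `α = p(0,0) > 0`, `β = p(0,1) > 0`,
`γ = p(1,0) > 0` and either (`δ = p(1,1) > 0` with `αδ < βγ`) or `δ = 0`,
the variables `U, V` which with probability `1-q` copy `X, Y` and with
probability `q` equal `max{2,X}, max{2,Y}` make the Ingleton expression
`-I(X;Y)+I(X;Y|U)+I(X;Y|V)+I(U;V)` strictly negative for all sufficiently
small `q > 0`.  (Alphabets are `0`-indexed: the paper's symbols `1, 2`
are `0, 1` here, and `max{2,·}` is `max 1 ·`.) -/
theorem stmt16 {N M : ℕ} (p : Fin (N + 2) × Fin (M + 2) → ℝ) (hp : IsPmf p)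
    (hα : 0 < p (0, 0)) (hβ : 0 < p (0, 1)) (hγ : 0 < p (1, 0))
    (hδ : (0 < p (1, 1) ∧ p (0, 0) * p (1, 1) < p (0, 1) * p (1, 0)) ∨
      p (1, 1) = 0) :
    ∃ ε > (0:ℝ), ∀ q : ℝ, 0 < q → q < ε →
      (fun pq : (Fin (N + 2) × Fin (M + 2)) × Bool → ℝ =>
        (fun (X : ((Fin (N + 2) × Fin (M + 2)) × Bool) → Fin (N + 2))
             (Y : ((Fin (N + 2) × Fin (M + 2)) × Bool) → Fin (M + 2))
             (U : ((Fin (N + 2) × Fin (M + 2)) × Bool) → Fin (N + 2))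
             (V : ((Fin (N + 2) × Fin (M + 2)) × Bool) → Fin (M + 2)) =>
          -(mi pq X Y) + cmi pq X Y U + cmi pq X Y V + mi pq U V)
          (fun w => w.1.1) (fun w => w.1.2)
          (fun w => if w.2 then w.1.1 else max 1 w.1.1)
          (fun w => if w.2 then w.1.2 else max 1 w.1.2))
        (fun w => p w.1 * (if w.2 then 1 - q else q)) < 0 :=
  stmt16_general p hα hβ hγ hδ
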